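/- arXiv:1712.05910 — 3 statements merged into one kernel-verified Lean document; each statement's English description precedes it below -/
import Mathlib

section
/- For λ₁ ≥ 0 and λ₂ > 0, the proximal mapping of p(x) = λ₁‖x‖₁ + λ₂‖x‖ on ℝⁿ decomposes as Prox_p(u) = Prox_{λ₂‖·‖}(Prox_{λ₁‖·‖₁}(u)) for every u ∈ ℝⁿ. -/
open scoped RealInnerProductSpace

/-- Subgradient inequality from prox minimality, for convex `c`. -/
lemma prox_subgrad {E : Type*} [NormedAddCommGroup E] [InnerProductSpace ℝ E]
    (c : E → ℝ) (u v : E)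
    (hconv : ∀ (y : E) (t : ℝ), 0 ≤ t → t ≤ 1 →
      c (v + t • (y - v)) ≤ (1 - t) * c v + t * c y)
    (hmin : ∀ x, c v + (1/2) * ‖v - u‖ ^ 2 ≤ c x + (1/2) * ‖x - u‖ ^ 2) :
    ∀ y, c v + ⟪u - v, y - v⟫ ≤ c y := by
  intro y
  by_contra h
  push_neg at h
  set A : ℝ := c y - c v + ⟪v - u, y - v⟫ with hA
  have hAneg : A < 0 := by
    have hswap : ⟪v - u, y - v⟫ = -⟪u - v, y - v⟫ := by
      rw [← inner_neg_left, neg_sub]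
    rw [hA, hswap]; linarith
  set C : ℝ := (1/2) * ‖y - v‖ ^ 2 with hCdef
  have hC : (0:ℝ) ≤ C := by positivity
  set s : ℝ := (-A) / (2*C + 1) with hsdef
  have hden : (0:ℝ) < 2*C + 1 := by linarith
  have hs : s * (2*C + 1) = -A := div_mul_cancel₀ _ (by linarith)
  have hs0 : 0 < s := div_pos (by linarith) hden
  set t : ℝ := min 1 s with htdef
  have ht0 : 0 < t := lt_min one_pos hs0
  have ht1 : t ≤ 1 := min_le_left _ _
  have htle : t ≤ s := min_le_right _ _
  have key := hmin (v + t • (y - v))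
  have hc := hconv y t ht0.le ht1
  have hexp : ‖(v + t • (y - v)) - u‖ ^ 2
      = ‖v - u‖ ^ 2 + 2 * (t * ⟪v - u, y - v⟫) + t^2 * ‖y - v‖ ^ 2 := by
    have h1 : (v + t • (y - v)) - u = (v - u) + t • (y - v) := by abel
    rw [h1, norm_add_sq_real, real_inner_smul_right, norm_smul]
    have h2 : ‖t‖ = |t| := rfl
    rw [h2, mul_pow, sq_abs]
  have hquad : 0 ≤ t * A + t^2 * C := by nlinarith [key, hc, hexp]
  have hneg : A + s * C < 0 := by nlinarith [hs, hs0, hAneg]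
  have h3 : t * C ≤ s * C := mul_le_mul_of_nonneg_right htle hC
  nlinarith [hquad, hneg, ht0, h3, mul_pos ht0 hs0]

/-- Prox decomposition for p = λ₁‖·‖₁ + λ₂‖·‖ (single group):
Prox_p(u) = Prox_{λ₂‖·‖}(Prox_{λ₁‖·‖₁}(u)). Stated via minimizer properties. -/
theorem prox_decomposition_single_group (n : ℕ) (lam1 lam2 : ℝ)
    (hlam1 : 0 ≤ lam1) (hlam2 : 0 < lam2)
    (u v w : EuclideanSpace ℝ (Fin n))
    (hv : ∀ x : EuclideanSpace ℝ (Fin n),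
      lam1 * (∑ i, |v i|) + (1 / 2) * ‖v - u‖ ^ 2 ≤
      lam1 * (∑ i, |x i|) + (1 / 2) * ‖x - u‖ ^ 2)
    (hw : ∀ x : EuclideanSpace ℝ (Fin n),
      lam2 * ‖w‖ + (1 / 2) * ‖w - v‖ ^ 2 ≤
      lam2 * ‖x‖ + (1 / 2) * ‖x - v‖ ^ 2) :
    ∀ x : EuclideanSpace ℝ (Fin n),
      lam1 * (∑ i, |w i|) + lam2 * ‖w‖ + (1 / 2) * ‖w - u‖ ^ 2 ≤
      lam1 * (∑ i, |x i|) + lam2 * ‖x‖ + (1 / 2) * ‖x - u‖ ^ 2 := by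
  intro x
  set c1 : EuclideanSpace ℝ (Fin n) → ℝ := fun z => lam1 * ∑ i, |z i| with hc1
  set c2 : EuclideanSpace ℝ (Fin n) → ℝ := fun z => lam2 * ‖z‖ with hc2
  -- convexity of c1
  have hconv1 : ∀ (y : EuclideanSpace ℝ (Fin n)) (t : ℝ), 0 ≤ t → t ≤ 1 →
      c1 (v + t • (y - v)) ≤ (1 - t) * c1 v + t * c1 y := by
    intro y t ht0 ht1
    have hcoord : ∀ i, |(v + t • (y - v)) i| ≤ (1 - t) * |v i| + t * |y i| := by
      intro i
      have hi : (v + t • (y - v)) i = (1 - t) * v i + t * y i := by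
        simp [PiLp.add_apply, PiLp.smul_apply, PiLp.sub_apply, smul_eq_mul]; ring
      rw [hi]
      calc |(1 - t) * v i + t * y i| ≤ |(1 - t) * v i| + |t * y i| := abs_add_le _ _
        _ = (1 - t) * |v i| + t * |y i| := by
            rw [abs_mul, abs_mul, abs_of_nonneg (by linarith : (0:ℝ) ≤ 1 - t),
              abs_of_nonneg ht0]
    simp only [hc1]
    calc lam1 * ∑ i, |(v + t • (y - v)) i|
        ≤ lam1 * ∑ i, ((1 - t) * |v i| + t * |y i|) :=
          mul_le_mul_of_nonneg_left (Finset.sum_le_sum fun i _ => hcoord i) hlam1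
      _ = (1 - t) * (lam1 * ∑ i, |v i|) + t * (lam1 * ∑ i, |y i|) := by
          rw [Finset.sum_add_distrib, ← Finset.mul_sum, ← Finset.mul_sum]; ring
  -- convexity of c2
  have hconv2 : ∀ (y : EuclideanSpace ℝ (Fin n)) (t : ℝ), 0 ≤ t → t ≤ 1 →
      c2 (w + t • (y - w)) ≤ (1 - t) * c2 w + t * c2 y := by
    intro y t ht0 ht1
    have hcomb : w + t • (y - w) = (1 - t) • w + t • y := by
      rw [smul_sub, sub_smul, one_smul]; abel
    simp only [hc2, hcomb]
    have hn : ‖(1 - t) • w + t • y‖ ≤ (1 - t) * ‖w‖ + t * ‖y‖ := by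
      calc ‖(1 - t) • w + t • y‖ ≤ ‖(1 - t) • w‖ + ‖t • y‖ := norm_add_le _ _
        _ = (1 - t) * ‖w‖ + t * ‖y‖ := by
            rw [norm_smul, norm_smul, Real.norm_eq_abs, Real.norm_eq_abs,
              abs_of_nonneg (by linarith : (0:ℝ) ≤ 1 - t), abs_of_nonneg ht0]
    nlinarith [hlam2, hn]
  have S1 := prox_subgrad c1 u v hconv1 hv
  have S2 := prox_subgrad c2 v w hconv2 hw
  -- w is a nonnegative multiple of v
  obtain ⟨α, hα, hwv⟩ : ∃ α : ℝ, 0 ≤ α ∧ w = α • v := by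
    by_cases hv0 : v = 0
    · refine ⟨0, le_refl 0, ?_⟩
      have h0 := hw 0
      simp [hv0] at h0 ⊢
      have hwn : ‖w‖ = 0 := by nlinarith [norm_nonneg w, sq_nonneg ‖w‖, hlam2]
      exact norm_eq_zero.mp hwn
    · have hvn : (0:ℝ) < ‖v‖ := norm_pos_iff.mpr hv0
      refine ⟨‖w‖ / ‖v‖, by positivity, ?_⟩
      have hx := hw ((‖w‖ / ‖v‖) • v)
      have hxn : ‖(‖w‖ / ‖v‖) • v‖ = ‖w‖ := by
        rw [norm_smul, Real.norm_eq_abs, abs_of_nonneg (by positivity)]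
        field_simp
      have hxsub : ‖(‖w‖ / ‖v‖) • v - v‖ ^ 2 = (‖w‖ - ‖v‖) ^ 2 := by
        have h5 : (‖w‖ / ‖v‖) • v - v = ((‖w‖ - ‖v‖) / ‖v‖) • v := by
          rw [sub_div, sub_smul, div_self hvn.ne', one_smul]
        rw [h5, norm_smul, Real.norm_eq_abs, mul_pow, sq_abs, div_pow]
        field_simp
      have hineq : ‖w - v‖ ^ 2 ≤ (‖w‖ - ‖v‖) ^ 2 := by
        rw [hxn, hxsub] at hx; linarith
      have hexp2 : ‖w - v‖ ^ 2 = ‖w‖ ^ 2 - 2 * ⟪w, v⟫ + ‖v‖ ^ 2 := by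
        rw [norm_sub_sq_real]
      have hcs : ⟪w, v⟫ ≤ ‖w‖ * ‖v‖ := real_inner_le_norm w v
      have heq : ⟪w, v⟫ = ‖w‖ * ‖v‖ := by nlinarith [hineq, hexp2]
      have hpar : ‖v‖ • w = ‖w‖ • v := (inner_eq_norm_mul_iff_real).mp heq
      have h6 := congrArg (fun z : EuclideanSpace ℝ (Fin n) => (‖v‖)⁻¹ • z) hpar
      simp only [smul_smul] at h6
      rw [inv_mul_cancel₀ hvn.ne', one_smul] at h6
      conv_lhs => rw [h6]
      rw [div_eq_inv_mul]
  -- consequences of w = α • v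
  have hsumw : (∑ i, |w i|) = α * ∑ i, |v i| := by
    rw [hwv]
    simp only [PiLp.smul_apply, smul_eq_mul, abs_mul, abs_of_nonneg hα, ← Finset.mul_sum]
  have hqv : ⟪u - v, v⟫ = c1 v := by
    have h0 := S1 0
    have h2 := S1 ((2:ℝ) • v)
    have hc10 : c1 (0 : EuclideanSpace ℝ (Fin n)) = 0 := by simp [hc1]
    have hc12 : c1 ((2:ℝ) • v) = 2 * c1 v := by
      simp only [hc1, PiLp.smul_apply, smul_eq_mul, abs_mul, ← Finset.mul_sum]
      rw [abs_of_nonneg (by norm_num : (0:ℝ) ≤ 2)]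
      ring
    rw [hc10, zero_sub, inner_neg_right] at h0
    have h2v : (2:ℝ) • v - v = v := by
      rw [two_smul]; abel
    rw [hc12, h2v] at h2
    linarith
  have hqw : ⟪u - v, w⟫ = lam1 * ∑ i, |w i| := by
    rw [hsumw, hwv, real_inner_smul_right, hqv]
    simp only [hc1]
    ring
  -- assemble
  have K1 := S1 x
  have K2 := S2 x
  have hsplit : ⟪u - v, x - v⟫ = ⟪u - v, x - w⟫ + ⟪u - v, w⟫ - ⟪u - v, v⟫ := by
    rw [inner_sub_right, inner_sub_right]; ring
  have hq : ‖x - u‖ ^ 2 = ‖w - u‖ ^ 2 + 2 * ⟪w - u, x - w⟫ + ‖x - w‖ ^ 2 := by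
    have h7 : x - u = (w - u) + (x - w) := by abel
    rw [h7, norm_add_sq_real]
  have hcancel : ⟪u - v, x - w⟫ + ⟪v - w, x - w⟫ + ⟪w - u, x - w⟫ = 0 := by
    rw [← inner_add_left, ← inner_add_left]
    have h8 : (u - v) + (v - w) + (w - u) = (0 : EuclideanSpace ℝ (Fin n)) := by abel
    rw [h8, inner_zero_left]
  have hnn : (0:ℝ) ≤ ‖x - w‖ ^ 2 := by positivity
  rw [hsplit, hqw, hqv] at K1
  simp only [hc1, hc2] at K1 K2 ⊢
  linarith [K1, K2, hq, hcancel, hnn]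
end

section
/- Let groups G₁,…,G_g form a partition of {1,…,n}, λ₁ ≥ 0, λ_{2,l} > 0, and p(x) = λ₁‖x‖₁ + Σ_l λ_{2,l}‖x_{G_l}‖. Then Prox_p(u) = Prox_φ(Prox_{λ₁‖·‖₁}(u)) for all u ∈ ℝⁿ, where φ(x) = Σ_l λ_{2,l}‖x_{G_l}‖. -/
section ProxSGLassoAux

variable {n : ℕ}

private lemma sglasso_nsq (y : EuclideanSpace ℝ (Fin n)) : ‖y‖ ^ 2 = ∑ i, (y i)^2 := by
  rw [EuclideanSpace.norm_eq, Real.sq_sqrt (by positivity)]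
  simp [Real.norm_eq_abs, sq_abs]

private lemma sglasso_update_sum (v : Fin n → ℝ) (i : Fin n) (t : ℝ) (F : Fin n → ℝ → ℝ) :
    ∑ j, F j (Function.update v i t j) = F i t + ∑ j ∈ Finset.univ.erase i, F j (v j) := by
  rw [← Finset.add_sum_erase _ _ (Finset.mem_univ i), Function.update_self]
  congr 1
  exact Finset.sum_congr rfl fun j hj => by
    rw [Function.update_of_ne (Finset.ne_of_mem_erase hj)]

private lemma sglasso_scalar_abs_le (lam1 uu vv : ℝ) (hlam1 : 0 ≤ lam1)
    (h : ∀ t : ℝ, lam1 * |vv| + (1/2) * (vv - uu)^2 ≤ lam1 * |t| + (1/2) * (t - uu)^2) :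
    |uu - vv| ≤ lam1 := by
  by_contra hc
  push_neg at hc
  rcases lt_abs.mp hc with h1 | h1
  · have ht := h (uu - lam1)
    have h2 : |uu - lam1| - |vv| ≤ uu - vv - lam1 := by
      have h3 := abs_sub_abs_le_abs_sub (uu - lam1) vv
      rwa [show uu - lam1 - vv = uu - vv - lam1 by ring,
        abs_of_nonneg (by linarith : (0:ℝ) ≤ uu - vv - lam1)] at h3
    nlinarith [ht, h2]
  · have ht := h (uu + lam1)
    have h2 : |uu + lam1| - |vv| ≤ vv - uu - lam1 := by
      have h3 := abs_sub_abs_le_abs_sub (uu + lam1) vv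
      have h4 : |uu + lam1 - vv| = vv - uu - lam1 := by
        rw [abs_sub_comm, abs_of_nonneg (by linarith : (0:ℝ) ≤ vv - (uu + lam1))]; ring
      rw [h4] at h3; linarith
    nlinarith [ht, h2]

private lemma sglasso_scalar_eq (lam1 uu vv : ℝ) (hd : |uu - vv| ≤ lam1)
    (h : ∀ t : ℝ, lam1 * |vv| + (1/2) * (vv - uu)^2 ≤ lam1 * |t| + (1/2) * (t - uu)^2) :
    (uu - vv) * vv = lam1 * |vv| := by
  have hub : (uu - vv) * vv ≤ lam1 * |vv| := by
    calc (uu - vv) * vv ≤ |(uu - vv) * vv| := le_abs_self _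
      _ = |uu - vv| * |vv| := abs_mul _ _
      _ ≤ lam1 * |vv| := mul_le_mul_of_nonneg_right hd (abs_nonneg _)
  refine le_antisymm hub ?_
  by_contra hc
  push_neg at hc
  rcases eq_or_ne vv 0 with hv0 | hv0
  · simp [hv0] at hc
  · have hv2 : 0 < vv^2 := by positivity
    set δ : ℝ := lam1 * |vv| - (uu - vv) * vv with hδdef
    have hδ : 0 < δ := by linarith
    set ε : ℝ := min 1 (δ / vv^2) with hεdef
    have hε0 : 0 < ε := lt_min one_pos (by positivity)
    have hε1 : ε ≤ 1 := min_le_left _ _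
    have hε2 : ε * vv^2 ≤ δ := by
      calc ε * vv^2 ≤ (δ / vv^2) * vv^2 :=
            mul_le_mul_of_nonneg_right (min_le_right _ _) (le_of_lt hv2)
        _ = δ := by field_simp
    have ht := h ((1 - ε) * vv)
    have habs : |(1 - ε) * vv| = (1 - ε) * |vv| := by
      rw [abs_mul, abs_of_nonneg (by linarith : (0:ℝ) ≤ 1 - ε)]
    rw [habs] at ht
    have hε3 : ε * (ε * vv^2) ≤ ε * δ := mul_le_mul_of_nonneg_left hε2 (le_of_lt hε0)
    nlinarith [ht, hε3, hε0, hδ]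

private lemma sglasso_group_key (S : Finset (Fin n)) (lam1 lam2 : ℝ) (hlam2 : 0 < lam2)
    (u v w : Fin n → ℝ)
    (hdv : ∀ i, (u i - v i) * v i = lam1 * |v i|)
    (hg : ∀ c : ℝ,
      lam2 * Real.sqrt (∑ i ∈ S, (w i)^2) + (1/2) * ∑ i ∈ S, (w i - v i)^2 ≤
      lam2 * (|c| * Real.sqrt (∑ i ∈ S, (v i)^2)) + (1/2) * ((c-1)^2 * ∑ i ∈ S, (v i)^2)) :
    ∀ i ∈ S, lam1 * |w i| = (u i - v i) * w i := by
  set Sv := ∑ i ∈ S, (v i)^2 with hSv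
  set Sw := ∑ i ∈ S, (w i)^2 with hSw
  have hSv0 : 0 ≤ Sv := Finset.sum_nonneg fun i _ => sq_nonneg _
  have hSw0 : 0 ≤ Sw := Finset.sum_nonneg fun i _ => sq_nonneg _
  rcases eq_or_lt_of_le hSv0 with hveq | hvpos
  · have hvz : ∀ i ∈ S, v i = 0 := by
      intro i hi
      have := (Finset.sum_eq_zero_iff_of_nonneg (fun i _ => sq_nonneg (v i))).mp hveq.symm i hi
      exact pow_eq_zero_iff (by norm_num) |>.mp this
    have h0 := hg 0
    have hwv : (∑ i ∈ S, (w i - v i)^2) = Sw :=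
      Finset.sum_congr rfl fun i hi => by rw [hvz i hi]; ring
    rw [hwv, ← hveq] at h0
    simp only [abs_zero, zero_mul, mul_zero, Real.sqrt_zero, add_zero, zero_add] at h0
    have hSwz : Sw = 0 := by
      nlinarith [Real.sqrt_nonneg Sw, mul_nonneg hlam2.le (Real.sqrt_nonneg Sw)]
    have hwz : ∀ i ∈ S, w i = 0 := by
      intro i hi
      have := (Finset.sum_eq_zero_iff_of_nonneg (fun i _ => sq_nonneg (w i))).mp hSwz i hi
      exact pow_eq_zero_iff (by norm_num) |>.mp this
    intro i hi
    rw [hwz i hi]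
    simp
  · have hsv : (0:ℝ) < Real.sqrt Sv := Real.sqrt_pos.mpr hvpos
    set c : ℝ := Real.sqrt Sw / Real.sqrt Sv with hc
    have hc0 : 0 ≤ c := by positivity
    have hcv : c * Real.sqrt Sv = Real.sqrt Sw := by
      rw [hc, div_mul_cancel₀ _ hsv.ne']
    have hc2 : c^2 * Sv = Sw := by
      rw [hc, div_pow, Real.sq_sqrt hSw0, Real.sq_sqrt hSv0, div_mul_cancel₀ _ hvpos.ne']
    have h := hg c
    rw [abs_of_nonneg hc0, hcv] at h
    have hexp : (∑ i ∈ S, (w i - v i)^2) = Sw - 2 * (∑ i ∈ S, w i * v i) + Sv := by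
      rw [hSw, hSv, Finset.mul_sum, ← Finset.sum_sub_distrib, ← Finset.sum_add_distrib]
      exact Finset.sum_congr rfl fun i _ => by ring
    set P := ∑ i ∈ S, w i * v i with hP
    rw [hexp] at h
    have hP2 : Real.sqrt Sw * Real.sqrt Sv ≤ P := by
      nlinarith [Real.sq_sqrt hSw0, Real.sq_sqrt hSv0]
    have hz : (∑ i ∈ S, (w i - c * v i)^2) = 0 := by
      have hcalc : (∑ i ∈ S, (w i - c * v i)^2) = Sw - 2 * c * P + c^2 * Sv := by
        rw [hSw, hSv, hP, Finset.mul_sum, Finset.mul_sum, ← Finset.sum_sub_distrib,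
          ← Finset.sum_add_distrib]
        exact Finset.sum_congr rfl fun i _ => by ring
      have hle : Sw - 2 * c * P + c^2 * Sv ≤ 0 := by
        have h1 : Real.sqrt Sw * Real.sqrt Sv * c ≤ P * c := mul_le_mul_of_nonneg_right hP2 hc0
        have h2 : Real.sqrt Sw * Real.sqrt Sv * c = Sw := by
          rw [show Real.sqrt Sw * Real.sqrt Sv * c = Real.sqrt Sw * (c * Real.sqrt Sv) by ring,
            hcv]
          exact Real.mul_self_sqrt hSw0
        nlinarith [hc2]
      have hge : 0 ≤ ∑ i ∈ S, (w i - c * v i)^2 := Finset.sum_nonneg fun i _ => sq_nonneg _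
      linarith [hcalc ▸ hge, hcalc ▸ hle]
    intro i hi
    have hwi : w i = c * v i := by
      have h1 := (Finset.sum_eq_zero_iff_of_nonneg
        (fun i _ => sq_nonneg (w i - c * v i))).mp hz i hi
      have h2 := pow_eq_zero_iff (two_ne_zero) |>.mp h1
      linarith
    rw [hwi, abs_mul, abs_of_nonneg hc0,
      show (u i - v i) * (c * v i) = c * ((u i - v i) * v i) by ring, hdv i]
    ring

end ProxSGLassoAux

/-- Prox decomposition for the sparse group Lasso regularizer over a partition:
Prox_p(u) = Prox_φ(Prox_{λ₁‖·‖₁}(u)), where φ(x) = Σ_l λ_{2,l}‖x_{G_l}‖. -/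
theorem prox_decomposition_sglasso (n g : ℕ) (G : Fin g → Finset (Fin n))
    (hdisj : Pairwise (Function.onFun Disjoint G))
    (hcover : ∀ i : Fin n, ∃ l, i ∈ G l)
    (lam1 : ℝ) (hlam1 : 0 ≤ lam1) (lam2 : Fin g → ℝ) (hlam2 : ∀ l, 0 < lam2 l)
    (u v w : EuclideanSpace ℝ (Fin n))
    (hv : ∀ x : EuclideanSpace ℝ (Fin n),
      lam1 * (∑ i, |v i|) + (1 / 2) * ‖v - u‖ ^ 2 ≤
      lam1 * (∑ i, |x i|) + (1 / 2) * ‖x - u‖ ^ 2)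
    (hw : ∀ x : EuclideanSpace ℝ (Fin n),
      (∑ l, lam2 l * Real.sqrt (∑ i ∈ G l, (w i) ^ 2)) + (1 / 2) * ‖w - v‖ ^ 2 ≤
      (∑ l, lam2 l * Real.sqrt (∑ i ∈ G l, (x i) ^ 2)) + (1 / 2) * ‖x - v‖ ^ 2) :
    ∀ x : EuclideanSpace ℝ (Fin n),
      lam1 * (∑ i, |w i|) + (∑ l, lam2 l * Real.sqrt (∑ i ∈ G l, (w i) ^ 2)) +
        (1 / 2) * ‖w - u‖ ^ 2 ≤
      lam1 * (∑ i, |x i|) + (∑ l, lam2 l * Real.sqrt (∑ i ∈ G l, (x i) ^ 2)) +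
        (1 / 2) * ‖x - u‖ ^ 2 := by
  -- Step 1: coordinatewise scalar optimality for v
  have hscalar : ∀ i : Fin n, ∀ t : ℝ,
      lam1 * |v i| + (1/2) * (v i - u i)^2 ≤ lam1 * |t| + (1/2) * (t - u i)^2 := by
    intro i t
    have h := hv (WithLp.toLp 2 (Function.update v i t))
    rw [sglasso_nsq, sglasso_nsq] at h
    simp only [PiLp.sub_apply, PiLp.toLp_apply] at h
    rw [sglasso_update_sum v i t (fun _ s => |s|),
      sglasso_update_sum v i t (fun j s => (s - u j)^2),
      ← Finset.add_sum_erase _ (fun j => |v j|) (Finset.mem_univ i),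
      ← Finset.add_sum_erase _ (fun j => (v j - u j)^2) (Finset.mem_univ i)] at h
    simp only [mul_add] at h
    linarith
  have hdle : ∀ i, |u i - v i| ≤ lam1 :=
    fun i => sglasso_scalar_abs_le lam1 (u i) (v i) hlam1 (hscalar i)
  have hdv : ∀ i, (u i - v i) * v i = lam1 * |v i| :=
    fun i => sglasso_scalar_eq lam1 (u i) (v i) (hdle i) (hscalar i)
  -- Step 2: groupwise scalar optimality for w
  have hg : ∀ (l : Fin g) (c : ℝ),
      lam2 l * Real.sqrt (∑ i ∈ G l, (w i)^2) + (1/2) * ∑ i ∈ G l, (w i - v i)^2 ≤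
      lam2 l * (|c| * Real.sqrt (∑ i ∈ G l, (v i)^2)) +
        (1/2) * ((c-1)^2 * ∑ i ∈ G l, (v i)^2) := by
    intro l c
    set x : EuclideanSpace ℝ (Fin n) := WithLp.toLp 2 (fun j => if j ∈ G l then c * v j else w j) with hxdef
    have hxin : ∀ j ∈ G l, x j = c * v j := fun j hj => by simp [hxdef, hj]
    have hxout : ∀ j, j ∉ G l → x j = w j := fun j hj => by simp [hxdef, hj]
    have h := hw x
    rw [sglasso_nsq, sglasso_nsq] at h
    simp only [PiLp.sub_apply] at h
    have hgs : (∑ l', lam2 l' * Real.sqrt (∑ i ∈ G l', (x i) ^ 2)) =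
        (∑ l', lam2 l' * Real.sqrt (∑ i ∈ G l', (w i) ^ 2))
        - lam2 l * Real.sqrt (∑ i ∈ G l, (w i)^2)
        + lam2 l * (|c| * Real.sqrt (∑ i ∈ G l, (v i)^2)) := by
      rw [← Finset.add_sum_erase _ _ (Finset.mem_univ l),
          ← Finset.add_sum_erase _ (fun l' => lam2 l' * Real.sqrt (∑ i ∈ G l', (w i) ^ 2))
            (Finset.mem_univ l)]
      have h1 : (∑ i ∈ G l, (x i) ^ 2) = c^2 * ∑ i ∈ G l, (v i)^2 := by
        rw [Finset.mul_sum]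
        exact Finset.sum_congr rfl fun i hi => by rw [hxin i hi]; ring
      have h2 : Real.sqrt (c^2 * ∑ i ∈ G l, (v i)^2)
          = |c| * Real.sqrt (∑ i ∈ G l, (v i)^2) := by
        rw [Real.sqrt_mul (sq_nonneg c), Real.sqrt_sq_eq_abs]
      have h3 : ∀ l' ∈ Finset.univ.erase l, lam2 l' * Real.sqrt (∑ i ∈ G l', (x i) ^ 2)
          = lam2 l' * Real.sqrt (∑ i ∈ G l', (w i) ^ 2) := by
        intro l' hl'
        congr 2
        refine Finset.sum_congr rfl fun i hi => ?_
        rw [hxout i ?_]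
        intro hil
        exact (Finset.disjoint_left.mp (hdisj (Finset.ne_of_mem_erase hl'))) hi hil
      rw [h1, h2, Finset.sum_congr rfl h3]
      ring
    have hsplit : ∀ y : Fin n → ℝ, (∑ i, (y i - v i)^2) =
        (∑ i ∈ G l, (y i - v i)^2) + ∑ i ∈ Finset.univ \ G l, (y i - v i)^2 := by
      intro y
      rw [add_comm, Finset.sum_sdiff (Finset.subset_univ _)]
    rw [hsplit x, hsplit w, hgs] at h
    have h4 : (∑ i ∈ G l, (x i - v i)^2) = (c-1)^2 * ∑ i ∈ G l, (v i)^2 := by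
      rw [Finset.mul_sum]
      exact Finset.sum_congr rfl fun i hi => by rw [hxin i hi]; ring
    have h5 : (∑ i ∈ Finset.univ \ G l, (x i - v i)^2)
        = ∑ i ∈ Finset.univ \ G l, (w i - v i)^2 :=
      Finset.sum_congr rfl fun i hi => by rw [hxout i (Finset.mem_sdiff.mp hi).2]
    rw [h4, h5] at h
    linarith
  -- Step 3: key per-coordinate identity for w
  have hkey : ∀ i, lam1 * |w i| = (u i - v i) * w i := by
    intro i
    obtain ⟨l, hil⟩ := hcover i
    exact sglasso_group_key (G l) lam1 (lam2 l) (hlam2 l) u v w hdv (hg l) i hil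
  have hkey2 : ∀ i (t : ℝ), (u i - v i) * t ≤ lam1 * |t| := by
    intro i t
    calc (u i - v i) * t ≤ |(u i - v i) * t| := le_abs_self _
      _ = |u i - v i| * |t| := abs_mul _ _
      _ ≤ lam1 * |t| := mul_le_mul_of_nonneg_right (hdle i) (abs_nonneg _)
  -- Step 4: assembly
  intro x
  have hwx := hw x
  rw [sglasso_nsq, sglasso_nsq] at hwx
  simp only [PiLp.sub_apply] at hwx
  rw [sglasso_nsq, sglasso_nsq]
  simp only [PiLp.sub_apply]
  set C : ℝ := ∑ i, ((u i - v i) * v i + (1/2) * (v i - u i)^2) with hC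
  have A1 : ∀ y : Fin n → ℝ, lam1 * (∑ i, |y i|) + (1/2) * ∑ i, (y i - u i)^2
      = (∑ i, (lam1 * |y i| - (u i - v i) * y i)) + ((1/2) * ∑ i, (y i - v i)^2 + C) := by
    intro y
    rw [hC]
    simp only [Finset.mul_sum, ← Finset.sum_add_distrib, ← Finset.sum_sub_distrib]
    exact Finset.sum_congr rfl fun i _ => by ring
  have hzero : (∑ i, (lam1 * |w i| - (u i - v i) * w i)) = 0 :=
    Finset.sum_eq_zero fun i _ => by rw [hkey i]; ring
  have hnn : 0 ≤ ∑ i, (lam1 * |x i| - (u i - v i) * x i) :=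
    Finset.sum_nonneg fun i _ => by linarith [hkey2 i (x i)]
  have e1 := A1 w
  have e2 := A1 x
  norm_num only at e1 e2 hwx ⊢
  linarith [e1, e2, hzero, hnn, hwx]
end

section
/- Let p(x) = λ₁‖x‖₁ + Σ_l λ_{2,l}‖x_{G_l}‖ over a partition G₁,…,G_g, and v = Prox_{λ₁‖·‖₁}(u). Then for all u ∈ ℝⁿ and each group l, the l-th block of Prox_p(u) equals v_{G_l} − Π_{B(λ_{2,l})}(v_{G_l}), where Π_{B(λ)} is projection onto the Euclidean ball of radius λ in ℝ^{|G_l|}. -/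
open Finset

lemma sgl_soft (lam a : ℝ) (hl : 0 ≤ lam) :
    |a - Real.sign a * max (|a| - lam) 0| ≤ lam ∧
      (a - Real.sign a * max (|a| - lam) 0) * (Real.sign a * max (|a| - lam) 0)
        = lam * |Real.sign a * max (|a| - lam) 0| := by
  rcases le_or_gt |a| lam with h | h
  · rw [max_eq_right (by linarith)]
    simpa using h
  · rw [max_eq_left (by linarith)]
    rcases lt_trichotomy a 0 with ha | ha | ha
    · rw [Real.sign_of_neg ha, abs_of_neg ha]
      refine ⟨?_, ?_⟩
      · rw [show a - -1 * (-a - lam) = -lam by ring, abs_neg, abs_of_nonneg hl]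
      · rw [show (-1:ℝ) * (-a - lam) = a + lam by ring,
          abs_of_neg (show a + lam < 0 by rw [abs_of_neg ha] at h; linarith)]
        ring
    · exfalso; rw [ha] at h; simp at h; linarith
    · rw [abs_of_pos ha] at h
      rw [Real.sign_of_pos ha, abs_of_pos ha]
      refine ⟨?_, ?_⟩
      · rw [show a - 1 * (a - lam) = lam by ring, abs_of_nonneg hl]
      · rw [one_mul, abs_of_pos (show (0:ℝ) < a - lam by linarith)]
        ring

lemma sgl_coord (lam u v c y : ℝ) (h1 : |u - v| ≤ lam) (h2 : (u - v) * c = lam * |c|) :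
    lam * |c| + (1/2)*(c - u)^2 + ((u - v) + (c - u)) * (y - c) ≤ lam * |y| + (1/2)*(y - u)^2 := by
  have hy : (u - v) * y ≤ lam * |y| := by
    calc (u - v) * y ≤ |(u - v) * y| := le_abs_self _
      _ = |u - v| * |y| := abs_mul _ _
      _ ≤ lam * |y| := mul_le_mul_of_nonneg_right h1 (abs_nonneg y)
  nlinarith [sq_nonneg (y - c)]

lemma sgl_tri {ι : Type*} (s : Finset ι) (a b : ι → ℝ) :
    Real.sqrt (∑ i ∈ s, (a i + b i)^2)
      ≤ Real.sqrt (∑ i ∈ s, a i^2) + Real.sqrt (∑ i ∈ s, b i^2) := by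
  have hA : (0:ℝ) ≤ ∑ i ∈ s, a i^2 := by positivity
  have hB : (0:ℝ) ≤ ∑ i ∈ s, b i^2 := by positivity
  have cs := Real.sum_mul_le_sqrt_mul_sqrt s a b
  have expand : ∑ i ∈ s, (a i + b i)^2
      = (∑ i ∈ s, a i^2) + 2*(∑ i ∈ s, a i * b i) + ∑ i ∈ s, b i^2 := by
    rw [Finset.mul_sum, ← Finset.sum_add_distrib, ← Finset.sum_add_distrib]
    exact Finset.sum_congr rfl fun i _ => by ring
  have key : ∑ i ∈ s, (a i + b i)^2
      ≤ (Real.sqrt (∑ i ∈ s, a i^2) + Real.sqrt (∑ i ∈ s, b i^2))^2 := by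
    nlinarith [Real.sq_sqrt hA, Real.sq_sqrt hB, Real.sqrt_nonneg (∑ i ∈ s, a i^2),
      Real.sqrt_nonneg (∑ i ∈ s, b i^2)]
  calc Real.sqrt (∑ i ∈ s, (a i + b i)^2)
      ≤ Real.sqrt ((Real.sqrt (∑ i ∈ s, a i^2) + Real.sqrt (∑ i ∈ s, b i^2))^2) :=
        Real.sqrt_le_sqrt key
    _ = _ := Real.sqrt_sq (by positivity)

lemma sgl_half {ι : Type*} (s : Finset ι) (f : ι → ℝ) :
    Real.sqrt (∑ i ∈ s, (f i / 2)^2) = Real.sqrt (∑ i ∈ s, f i^2) / 2 := by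
  have h : ∑ i ∈ s, (f i/2)^2 = (∑ i ∈ s, f i^2) * (1/2)^2 := by
    rw [Finset.sum_mul]; exact Finset.sum_congr rfl fun i _ => by ring
  rw [h, Real.sqrt_mul (by positivity), Real.sqrt_sq (by norm_num)]
  ring
open Finset


/-- Blockwise formula for Prox_p with p(x) = λ₁‖x‖₁ + Σ_l λ_{2,l}‖x_{G_l}‖:
with v = Prox_{λ₁‖·‖₁}(u), the l-th block of Prox_p(u) equals
v_{G_l} − Π_{B(λ_{2,l})}(v_{G_l}). -/
theorem prox_sglasso_blockwise (n g : ℕ) (G : Fin g → Finset (Fin n))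
    (hdisj : Pairwise (Function.onFun Disjoint G))
    (hcover : ∀ i : Fin n, ∃ l, i ∈ G l)
    (lam1 : ℝ) (hlam1 : 0 ≤ lam1) (lam2 : Fin g → ℝ) (hlam2 : ∀ l, 0 < lam2 l)
    (u w : EuclideanSpace ℝ (Fin n))
    (hw : ∀ x : EuclideanSpace ℝ (Fin n),
      lam1 * (∑ i, |w i|) + (∑ l, lam2 l * Real.sqrt (∑ i ∈ G l, (w i) ^ 2)) +
        (1 / 2) * ‖w - u‖ ^ 2 ≤
      lam1 * (∑ i, |x i|) + (∑ l, lam2 l * Real.sqrt (∑ i ∈ G l, (x i) ^ 2)) +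
        (1 / 2) * ‖x - u‖ ^ 2) :
    let v : Fin n → ℝ := fun i => Real.sign (u i) * max (|u i| - lam1) 0
    let nv : Fin g → ℝ := fun l => Real.sqrt (∑ i ∈ G l, (v i) ^ 2)
    ∀ l : Fin g, ∀ i ∈ G l,
      w i = v i - (if nv l ≤ lam2 l then v i else (lam2 l / nv l) * v i) := by
  intro v nv
  have hv : ∀ i, v i = Real.sign (u i) * max (|u i| - lam1) 0 := fun i => rfl
  have hnv : ∀ l, nv l = Real.sqrt (∑ i ∈ G l, v i ^ 2) := fun l => rfl
  -- group assignment
  obtain ⟨L, hL⟩ : ∃ L : Fin n → Fin g, ∀ i, i ∈ G (L i) :=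
    ⟨fun i => (hcover i).choose, fun i => (hcover i).choose_spec⟩
  have hLeq : ∀ l : Fin g, ∀ i ∈ G l, L i = l := by
    intro l i hi
    by_contra hne
    exact Finset.disjoint_left.mp (hdisj hne) (hL i) hi
  -- basic quantities
  set m : Fin g → ℝ := fun l => max (nv l) (lam2 l) with hm_def
  have hnv0 : ∀ l, 0 ≤ nv l := fun l => by rw [hnv]; exact Real.sqrt_nonneg _
  have hm_pos : ∀ l, 0 < m l := fun l => lt_of_lt_of_le (hlam2 l) (le_max_right _ _)
  set t : Fin g → ℝ := fun l => 1 - lam2 l / m l with ht_def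
  have ht0 : ∀ l, 0 ≤ t l := by
    intro l
    have : lam2 l / m l ≤ 1 := (div_le_one (hm_pos l)).mpr (le_max_right _ _)
    simp only [ht_def]; linarith
  set c : EuclideanSpace ℝ (Fin n) := WithLp.toLp 2 (fun i => v i - (lam2 (L i) / m (L i)) * v i) with hc_def
  have hc : ∀ i, c i = v i - (lam2 (L i) / m (L i)) * v i := fun i => rfl
  have hct : ∀ i, c i = t (L i) * v i := by
    intro i; rw [hc]; simp only [ht_def]; ring
  -- sums of squares
  have hsumv : ∀ l, ∑ i ∈ G l, v i ^ 2 = nv l ^ 2 := by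
    intro l; rw [hnv, Real.sq_sqrt (by positivity)]
  have hsumc : ∀ l, ∑ i ∈ G l, c i ^ 2 = (t l * nv l) ^ 2 := by
    intro l
    have : ∑ i ∈ G l, c i ^ 2 = ∑ i ∈ G l, (t l * v i) ^ 2 :=
      Finset.sum_congr rfl fun i hi => by rw [hct, hLeq l i hi]
    rw [this]
    have : ∑ i ∈ G l, (t l * v i) ^ 2 = t l ^ 2 * ∑ i ∈ G l, v i ^ 2 := by
      rw [Finset.mul_sum]; exact Finset.sum_congr rfl fun i _ => by ring
    rw [this, hsumv]; ring
  have hNc : ∀ l, Real.sqrt (∑ i ∈ G l, c i ^ 2) = t l * nv l := by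
    intro l; rw [hsumc, Real.sqrt_sq (mul_nonneg (ht0 l) (hnv0 l))]
  -- soft-threshold facts
  have hv1 : ∀ i, |u i - v i| ≤ lam1 := fun i => by
    rw [hv]; exact (sgl_soft lam1 (u i) hlam1).1
  have hv2c : ∀ i, (u i - v i) * c i = lam1 * |c i| := by
    intro i
    have h2 : (u i - v i) * v i = lam1 * |v i| := by
      rw [hv]; exact (sgl_soft lam1 (u i) hlam1).2
    rw [hct, abs_mul, abs_of_nonneg (ht0 (L i))]
    calc (u i - v i) * (t (L i) * v i) = t (L i) * ((u i - v i) * v i) := by ring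
      _ = t (L i) * (lam1 * |v i|) := by rw [h2]
      _ = lam1 * (t (L i) * |v i|) := by ring
  -- zero bracket
  have hbr : ∀ i, (u i - v i) + lam2 (L i) * (v i / m (L i)) + (c i - u i) = 0 := by
    intro i; rw [hc]; ring
  -- partition of sums
  have hpart : ∀ f : Fin n → ℝ, ∑ i, f i = ∑ l, ∑ i ∈ G l, f i := by
    intro f
    have hU : Finset.univ.biUnion G = Finset.univ := by
      ext i; simpa using hcover i
    rw [← hU, Finset.sum_biUnion (fun a _ b _ hab => hdisj hab)]
  -- norm as coordinate sum
  have hnorm : ∀ x : EuclideanSpace ℝ (Fin n), ‖x - u‖ ^ 2 = ∑ i, (x i - u i) ^ 2 := by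
    intro x
    rw [EuclideanSpace.norm_eq, Real.sq_sqrt (by positivity)]
    exact Finset.sum_congr rfl fun i _ => by
      rw [show ‖(x - u) i‖ = |x i - u i| from rfl, sq_abs]
  -- group subgradient inequality
  have hsc : ∀ l, ∑ i ∈ G l, (v i / m l) * c i = t l * nv l := by
    intro l
    have e1 : ∑ i ∈ G l, (v i / m l) * c i = (t l / m l) * ∑ i ∈ G l, v i ^ 2 := by
      rw [Finset.mul_sum]
      exact Finset.sum_congr rfl fun i hi => by rw [hct, hLeq l i hi]; ring
    rw [e1, hsumv]
    rcases le_or_gt (nv l) (lam2 l) with h | h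
    · have hm : m l = lam2 l := max_eq_right h
      have htz : t l = 0 := by
        have e : t l = 1 - lam2 l / m l := rfl
        rw [e, hm, div_self (hlam2 l).ne']; ring
      rw [htz]; ring
    · have hm : m l = nv l := max_eq_left h.le
      have hnvpos : 0 < nv l := lt_trans (hlam2 l) h
      rw [hm]; field_simp
  have hgrp : ∀ l, lam2 l * (t l * nv l) + ∑ i ∈ G l, (lam2 l * (v i / m l)) * (w i - c i)
      ≤ lam2 l * Real.sqrt (∑ i ∈ G l, w i ^ 2) := by
    intro l
    have hcs : ∑ i ∈ G l, (v i / m l) * w i ≤ Real.sqrt (∑ i ∈ G l, w i ^ 2) := by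
      have h1 : ∑ i ∈ G l, (v i / m l) ^ 2 = (nv l / m l) ^ 2 := by
        simp_rw [div_pow]
        rw [← Finset.sum_div, hsumv]
      calc ∑ i ∈ G l, (v i / m l) * w i
          ≤ Real.sqrt (∑ i ∈ G l, (v i / m l) ^ 2) * Real.sqrt (∑ i ∈ G l, w i ^ 2) :=
            Real.sum_mul_le_sqrt_mul_sqrt _ _ _
        _ = (nv l / m l) * Real.sqrt (∑ i ∈ G l, w i ^ 2) := by
            rw [h1, Real.sqrt_sq (div_nonneg (hnv0 l) (hm_pos l).le)]
        _ ≤ 1 * Real.sqrt (∑ i ∈ G l, w i ^ 2) := by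
            apply mul_le_mul_of_nonneg_right _ (Real.sqrt_nonneg _)
            exact (div_le_one (hm_pos l)).mpr (le_max_left _ _)
        _ = Real.sqrt (∑ i ∈ G l, w i ^ 2) := one_mul _
    have expand : ∑ i ∈ G l, (lam2 l * (v i / m l)) * (w i - c i)
        = lam2 l * ((∑ i ∈ G l, (v i / m l) * w i) - t l * nv l) := by
      rw [← hsc, ← Finset.sum_sub_distrib, Finset.mul_sum]
      exact Finset.sum_congr rfl fun i _ => by ring
    rw [expand]
    calc lam2 l * (t l * nv l) + lam2 l * ((∑ i ∈ G l, (v i / m l) * w i) - t l * nv l)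
        = lam2 l * ∑ i ∈ G l, (v i / m l) * w i := by ring
      _ ≤ lam2 l * Real.sqrt (∑ i ∈ G l, w i ^ 2) :=
          mul_le_mul_of_nonneg_left hcs (hlam2 l).le
  -- F(c) ≤ F(w)
  have hFcw : lam1 * (∑ i, |c i|) + (∑ l, lam2 l * Real.sqrt (∑ i ∈ G l, (c i) ^ 2)) +
        (1 / 2) * ‖c - u‖ ^ 2 ≤
      lam1 * (∑ i, |w i|) + (∑ l, lam2 l * Real.sqrt (∑ i ∈ G l, (w i) ^ 2)) +
        (1 / 2) * ‖w - u‖ ^ 2 := by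
    have P1 : ∑ i, (lam1 * |c i| + (1/2)*(c i - u i)^2
          + ((u i - v i) + (c i - u i)) * (w i - c i))
        ≤ ∑ i, (lam1 * |w i| + (1/2)*(w i - u i)^2) :=
      Finset.sum_le_sum fun i _ =>
        sgl_coord lam1 (u i) (v i) (c i) (w i) (hv1 i) (hv2c i)
    have P2 : ∑ l, (lam2 l * (t l * nv l) + ∑ i ∈ G l, (lam2 l * (v i / m l)) * (w i - c i))
        ≤ ∑ l, lam2 l * Real.sqrt (∑ i ∈ G l, w i ^ 2) :=
      Finset.sum_le_sum fun l _ => hgrp l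
    have hS : (∑ i, ((u i - v i) + (c i - u i)) * (w i - c i))
        + (∑ l, ∑ i ∈ G l, (lam2 l * (v i / m l)) * (w i - c i)) = 0 := by
      rw [hpart (fun i => ((u i - v i) + (c i - u i)) * (w i - c i)),
        ← Finset.sum_add_distrib]
      apply Finset.sum_eq_zero
      intro l _
      rw [← Finset.sum_add_distrib]
      apply Finset.sum_eq_zero
      intro i hi
      have hb := hbr i
      rw [hLeq l i hi] at hb
      linear_combination (w i - c i) * hb
    have e1 : ∑ i, (lam1 * |c i| + (1/2)*(c i - u i)^2
          + ((u i - v i) + (c i - u i)) * (w i - c i))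
        = lam1 * (∑ i, |c i|) + (1/2) * (∑ i, (c i - u i)^2)
          + ∑ i, ((u i - v i) + (c i - u i)) * (w i - c i) := by
      simp only [Finset.sum_add_distrib, Finset.mul_sum]
    have e2 : ∑ i, (lam1 * |w i| + (1/2)*(w i - u i)^2)
        = lam1 * (∑ i, |w i|) + (1/2) * (∑ i, (w i - u i)^2) := by
      simp only [Finset.sum_add_distrib, Finset.mul_sum]
    have e3 : ∑ l, (lam2 l * (t l * nv l) + ∑ i ∈ G l, (lam2 l * (v i / m l)) * (w i - c i))
        = (∑ l, lam2 l * (t l * nv l))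
          + ∑ l, ∑ i ∈ G l, (lam2 l * (v i / m l)) * (w i - c i) :=
      Finset.sum_add_distrib
    have e4 : ∑ l, lam2 l * Real.sqrt (∑ i ∈ G l, c i ^ 2) = ∑ l, lam2 l * (t l * nv l) :=
      Finset.sum_congr rfl fun l _ => by rw [hNc l]
    rw [hnorm w, hnorm c, e4]
    rw [e1] at P1
    rw [e2] at P1
    rw [e3] at P2
    linarith [P1, P2, hS]
  -- midpoint argument establishing w = c
  have hwc : ∀ i, w i = c i := by
    set d : EuclideanSpace ℝ (Fin n) := WithLp.toLp 2 (fun i => (w i + c i)/2) with hd_def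
    have hdapp : ∀ i, d i = (w i + c i)/2 := fun i => rfl
    have hd := hw d
    rw [hnorm w, hnorm d] at hd
    rw [hnorm w, hnorm c] at hFcw
    -- bound the ℓ1 part of F(d)
    have b1 : lam1 * (∑ i, |d i|)
        ≤ lam1 * ((1/2) * (∑ i, |w i|) + (1/2) * (∑ i, |c i|)) := by
      apply mul_le_mul_of_nonneg_left _ hlam1
      calc ∑ i, |d i| ≤ ∑ i, ((1/2)*|w i| + (1/2)*|c i|) := by
            apply Finset.sum_le_sum
            intro i _
            rw [hdapp i, abs_div, show |(2:ℝ)| = 2 by norm_num]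
            have := abs_add_le (w i) (c i)
            linarith
        _ = (1/2) * (∑ i, |w i|) + (1/2) * (∑ i, |c i|) := by
            simp only [Finset.sum_add_distrib, Finset.mul_sum]
    -- bound the group part of F(d)
    have b2 : ∀ l, Real.sqrt (∑ i ∈ G l, d i ^ 2)
        ≤ Real.sqrt (∑ i ∈ G l, w i ^ 2) / 2 + Real.sqrt (∑ i ∈ G l, c i ^ 2) / 2 := by
      intro l
      have e : ∑ i ∈ G l, d i ^ 2 = ∑ i ∈ G l, (w i / 2 + c i / 2) ^ 2 :=
        Finset.sum_congr rfl fun i _ => by rw [hdapp i]; ring_nf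
      rw [e]
      calc Real.sqrt (∑ i ∈ G l, (w i / 2 + c i / 2) ^ 2)
          ≤ Real.sqrt (∑ i ∈ G l, (w i / 2) ^ 2) + Real.sqrt (∑ i ∈ G l, (c i / 2) ^ 2) :=
            sgl_tri _ _ _
        _ = Real.sqrt (∑ i ∈ G l, w i ^ 2) / 2 + Real.sqrt (∑ i ∈ G l, c i ^ 2) / 2 := by
            rw [sgl_half, sgl_half]
    have b2sum : ∑ l, lam2 l * Real.sqrt (∑ i ∈ G l, d i ^ 2)
        ≤ (1/2) * (∑ l, lam2 l * Real.sqrt (∑ i ∈ G l, w i ^ 2))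
          + (1/2) * (∑ l, lam2 l * Real.sqrt (∑ i ∈ G l, c i ^ 2)) := by
      calc ∑ l, lam2 l * Real.sqrt (∑ i ∈ G l, d i ^ 2)
          ≤ ∑ l, ((1/2) * (lam2 l * Real.sqrt (∑ i ∈ G l, w i ^ 2))
              + (1/2) * (lam2 l * Real.sqrt (∑ i ∈ G l, c i ^ 2))) := by
            apply Finset.sum_le_sum
            intro l _
            have := mul_le_mul_of_nonneg_left (b2 l) (hlam2 l).le
            linarith
        _ = _ := by simp only [Finset.sum_add_distrib, Finset.mul_sum]
    -- quadratic identity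
    have b3 : ∑ i, (d i - u i) ^ 2
        = (1/2) * (∑ i, (w i - u i) ^ 2) + (1/2) * (∑ i, (c i - u i) ^ 2)
          - (1/4) * (∑ i, (w i - c i) ^ 2) := by
      have e : ∀ i : Fin n, (d i - u i) ^ 2
          = (1/2)*(w i - u i)^2 + (1/2)*(c i - u i)^2 - (1/4)*(w i - c i)^2 :=
        fun i => by rw [hdapp i]; ring
      rw [Finset.sum_congr rfl fun i _ => e i]
      simp only [Finset.sum_sub_distrib, Finset.sum_add_distrib, Finset.mul_sum]
    have hsq : ∑ i, (w i - c i) ^ 2 ≤ 0 := by linarith [hd, hFcw, b1, b2sum, b3]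
    intro i
    have h0 : ∑ i, (w i - c i) ^ 2 = 0 :=
      le_antisymm hsq (Finset.sum_nonneg fun i _ => sq_nonneg _)
    have h2 : (w i - c i) ^ 2 = 0 :=
      (Finset.sum_eq_zero_iff_of_nonneg fun i _ => sq_nonneg _).mp h0 i (Finset.mem_univ i)
    have h3 : w i - c i = 0 := by
      exact pow_eq_zero_iff (two_ne_zero) |>.mp h2
    linarith
  -- conclusion
  intro l i hi
  rw [hwc i, hc i, hLeq l i hi]
  split_ifs with h
  · have hm : m l = lam2 l := max_eq_right h
    rw [hm, div_self (hlam2 l).ne', one_mul]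
  · have hm : m l = nv l := max_eq_left (le_of_not_ge h)
    rw [hm]
end
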